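/- arXiv:0801.1060 — 4 statements merged into one kernel-verified Lean document; each statement's English description precedes it below -/
import Mathlib

section
/- For a binary word u = u_1 u_2 … u_r of length r > 2^j − 1, if u* = ψ^{2^j − 1}(u), then the i-th letter of u* equals u_i + u_{i+1} + ⋯ + u_{i+2^j−1} mod 2, for all 1 ≤ i ≤ r − (2^j − 1). -/
/-!
Over `ZMod 2` subtraction is addition, so `ψ` is the forward difference operator applied to the
word read as a sequence, and `ψ^m` takes the `i`-th letter to `∑ₜ C(m, t) u_{i+t}`. For
`m = 2^j - 1` all these binomial coefficients are odd: Pascal's rule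
`C(2^j - 1, t) + C(2^j - 1, t + 1) = C(2^j, t + 1)` with the right side divisible by `2` for
`0 < t + 1 < 2^j` propagates `C(2^j - 1, t) ≡ (-1)^t` from `t = 0`.
-/

/-- The sliding-block map ψ on binary words: ψ(u₁…uₙ) = u*₁…u*ₙ₋₁ with u*ᵢ = uᵢ + uᵢ₊₁ (mod 2). -/
def psiW : List (ZMod 2) → List (ZMod 2)
  | a :: b :: rest => (a + b) :: psiW (b :: rest)
  | _ => []

/-- The forbidden sets: F 1 = {0}, F (k+1) = ψ⁻¹(F k). -/
def F : ℕ → Set (List (ZMod 2))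
  | 0 => ∅
  | 1 => {[(0 : ZMod 2)]}
  | (k + 1) => psiW ⁻¹' F k

open fwdDiff

theorem psiW_length : ∀ u : List (ZMod 2), (psiW u).length = u.length - 1
  | [] | [_] => rfl
  | _ :: b :: rest => by simp [psiW, psiW_length (b :: rest)]

theorem getD_psiW : ∀ (u : List (ZMod 2)) (k : ℕ), k + 1 < u.length →
    (psiW u).getD k 0 = u.getD k 0 + u.getD (k + 1) 0
  | _ :: _ :: _, 0, _ => rfl
  | _ :: b :: rest, k + 1, hk => getD_psiW (b :: rest) k (by simpa using hk)

theorem length_iterate_psiW (m : ℕ) (u : List (ZMod 2)) :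
    (psiW^[m] u).length = u.length - m := by
  induction m with
  | zero => rfl
  | succ m ih => rw [Function.iterate_succ_apply', psiW_length, ih, Nat.sub_sub]

theorem getD_iterate_psiW (m : ℕ) (u : List (ZMod 2)) (i : ℕ) (h : i + m < u.length) :
    (psiW^[m] u).getD i 0 = (Δ_[1])^[m] (fun n ↦ u.getD n 0) i := by
  induction m generalizing i with
  | zero => rfl
  | succ m ih =>
    rw [Function.iterate_succ_apply', Function.iterate_succ_apply',
      getD_psiW _ _ (by rw [length_iterate_psiW]; omega), fwdDiff, ih i (by omega),
      ih (i + 1) (by omega), CharTwo.sub_eq_add, add_comm]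

theorem Nat.Prime.cast_choose_pow_sub_one {p : ℕ} (hp : p.Prime) (j : ℕ) :
    ∀ t < p ^ j, ((p ^ j - 1).choose t : ZMod p) = (-1) ^ t
  | 0, _ => by simp
  | t + 1, ht => by
    have hpow : 1 ≤ p ^ j := Nat.one_le_pow _ _ hp.pos
    have hpascal := Nat.choose_succ_succ' (p ^ j - 1) t
    rw [Nat.sub_add_cancel hpow] at hpascal
    have hdvd : ((p ^ j).choose (t + 1) : ZMod p) = 0 :=
      (ZMod.natCast_eq_zero_iff _ _).2 (Nat.Prime.dvd_choose_pow hp (by omega) (by omega))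
    rw [hpascal, Nat.cast_add, hp.cast_choose_pow_sub_one j t (by omega)] at hdvd
    rw [pow_succ, mul_neg_one, eq_neg_iff_add_eq_zero, add_comm, hdvd]

theorem stmt_1_general (j r : ℕ) (u : List (ZMod 2)) (hu : u.length = r)
    (i : ℕ) (hi : i < r - (2 ^ j - 1)) :
    (psiW^[2 ^ j - 1] u).getD i 0 = ∑ t ∈ Finset.range (2 ^ j), u.getD (i + t) 0 := by
  have hpow : 1 ≤ 2 ^ j := Nat.one_le_two_pow
  rw [getD_iterate_psiW _ _ _ (by omega), fwdDiff_iter_eq_sum_shift, Nat.sub_add_cancel hpow]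
  refine Finset.sum_congr rfl fun t ht ↦ ?_
  have hchoose := Nat.prime_two.cast_choose_pow_sub_one j t (Finset.mem_range.1 ht)
  have hneg : (-1 : ZMod 2) = 1 := rfl
  rw [hneg, one_pow] at hchoose
  simp [zsmul_eq_mul, hchoose, hneg]

/-- for a word u of length r > 2^j − 1, the i-th letter of ψ^{2^j−1}(u) equals
uᵢ + uᵢ₊₁ + ⋯ + u_{i+2^j−1} (mod 2), zero-indexed. -/
theorem stmt_1 (j r : ℕ) (u : List (ZMod 2)) (hu : u.length = r) (hr : 2 ^ j - 1 < r)
    (i : ℕ) (hi : i < r - (2 ^ j - 1)) :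
    (psiW^[2 ^ j - 1] u).getD i 0 = ∑ t ∈ Finset.range (2 ^ j), u.getD (i + t) 0 :=
  stmt_1_general j r u hu i hi
end

section
/- If a binary word z of length 2^j (for some j ≥ 0) contains an odd number of 1's, then z does not belong to F_{2^j}. -/
namespace List

theorem zipWith_append_left_of_length_le {α β γ : Type*} (f : α → β → γ) {a c : List α}
    {b : List β} (h : b.length ≤ a.length) : zipWith f (a ++ c) b = zipWith f a b := by
  apply ext_getElem
  · simp only [length_zipWith, length_append]
    omega
  · intro i hi _
    simp only [length_zipWith] at hi
    simp only [getElem_zipWith, getElem_append_left (show i < a.length by omega)]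

theorem zipWith_add_zipWith_add_of_length_le {R : Type*} [Semiring R] [CharP R 2]
    (a b c : List R) (h : c.length ≤ b.length) :
    zipWith (· + ·) (zipWith (· + ·) a b) (zipWith (· + ·) b c) = zipWith (· + ·) a c := by
  apply ext_getElem
  · simp only [length_zipWith]
    omega
  · intro i _ _
    simp only [getElem_zipWith]
    rw [add_assoc, CharTwo.add_cancel_left]

end List

open List

theorem sum_eq_count_one (z : List (ZMod 2)) : z.sum = (z.count 1 : ZMod 2) := by
  induction z with
  | nil => rfl
  | cons x t ih =>
    rcases (by decide : ∀ x : ZMod 2, x = 0 ∨ x = 1) x with rfl | rfl <;> simp [ih, add_comm]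

theorem psiW_eq_zipWith (z : List (ZMod 2)) : psiW z = zipWith (· + ·) z (z.drop 1) := by
  match z with
  | [] | [_] => rfl
  | a :: b :: r =>
    rw [psiW, psiW_eq_zipWith (b :: r)]
    rfl

theorem psiW_iterate_two_pow (m : ℕ) (z : List (ZMod 2)) :
    psiW^[2 ^ m] z = zipWith (· + ·) z (z.drop (2 ^ m)) := by
  induction m generalizing z with
  | zero => simpa using psiW_eq_zipWith z
  | succ m ih =>
    rw [pow_succ, mul_two, Function.iterate_add_apply, ih, ih, drop_zipWith, drop_drop,
      zipWith_add_zipWith_add_of_length_le]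
    simp only [length_drop]
    exact Nat.sub_le_sub_left (Nat.le_add_right _ _) _

theorem psiW_iterate_two_pow_sub_one {j : ℕ} {z : List (ZMod 2)} (hz : z.length = 2 ^ j) :
    psiW^[2 ^ j - 1] z = [z.sum] := by
  induction j generalizing z with
  | zero =>
    obtain ⟨a, rfl⟩ := length_eq_one_iff.mp hz
    simp
  | succ j ih =>
    obtain ⟨a, b, rfl, ha, hb⟩ : ∃ a b, z = a ++ b ∧ a.length = 2 ^ j ∧ b.length = 2 ^ j :=
      ⟨z.take (2 ^ j), z.drop (2 ^ j), (take_append_drop _ _).symm,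
        by simp [hz, pow_succ], by simp [hz, pow_succ]; omega⟩
    have hfold : psiW^[2 ^ j] (a ++ b) = zipWith (· + ·) a b := by
      rw [psiW_iterate_two_pow, ← ha, drop_left, zipWith_append_left_of_length_le _ (by omega)]
    have hsplit : 2 ^ (j + 1) - 1 = (2 ^ j - 1) + 2 ^ j := by
      have := j.two_pow_pos
      rw [pow_succ]
      omega
    rw [hsplit, Function.iterate_add_apply, hfold, ih (by simp [ha, hb]),
      ← sum_add_sum_eq_sum_zipWith_of_length_eq a b (ha.trans hb.symm), sum_append]

theorem mem_F_succ_iff {k : ℕ} {z : List (ZMod 2)} : z ∈ F (k + 1) ↔ psiW^[k] z = [0] := by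
  induction k generalizing z with
  | zero => simp [F]
  | succ k ih =>
    rw [Function.iterate_succ_apply, ← ih]
    rfl

/-- if z has length 2^j and an odd number of 1's, then z ∉ F_{2^j}. -/
theorem stmt_6 (j : ℕ) (z : List (ZMod 2)) (hz : z.length = 2 ^ j)
    (hodd : Odd (z.count (1 : ZMod 2))) : z ∉ F (2 ^ j) := by
  rw [← Nat.sub_add_cancel j.one_le_two_pow, mem_F_succ_iff, psiW_iterate_two_pow_sub_one hz,
    sum_eq_count_one, singleton_inj, ZMod.natCast_eq_zero_iff_even, Nat.not_even_iff_odd]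
  exact hodd
end

section
/- For any j ≥ 0, there is no periodic bi-infinite sequence x in the PFT X_{2^j+1} whose period is (2t+1)·2^j for some t ≥ 0. Here x ∈ X_{2^j+1} means: there exists r ∈ {0,1} such that for every even integer i, the length-(2^j+1) subword of σ^r(x) starting at position i is not in F_{2^j+1}. -/
/-- ψ on bi-infinite binary sequences. -/
def psiZ (x : ℤ → ZMod 2) : ℤ → ZMod 2 := fun i => x i + x (i + 1)

/-- Length-`k` subword of `x` starting at index `i`. -/
def subword (x : ℤ → ZMod 2) (i : ℤ) (k : ℕ) : List (ZMod 2) :=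
  (List.range k).map fun t => x (i + t)

/-- Membership in the PFT X_k: for some shift r ∈ {0,1}, no subword of σʳ(x) starting at an
even index belongs to F k. -/
def inX (k : ℕ) (x : ℤ → ZMod 2) : Prop :=
  ∃ r : ℕ, r < 2 ∧ ∀ i : ℤ, Even i → subword x (i + r) k ∉ F k


open Function

lemma F_add_two (k : ℕ) : F (k + 2) = psiW ⁻¹' F (k + 1) := rfl

lemma subword_zero (x : ℤ → ZMod 2) (i : ℤ) : subword x i 0 = [] := rfl

lemma subword_eq_map (x : ℤ → ZMod 2) (i : ℤ) (k : ℕ) :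
    subword x i k = (List.range k).map fun t : ℕ => x (i + t) := by
  simp [subword, ← List.map_eq_flatMap]

lemma subword_succ (x : ℤ → ZMod 2) (i : ℤ) (n : ℕ) :
    subword x i (n + 1) = x i :: subword x (i + 1) n := by
  simp [subword_eq_map, List.range_succ_eq_map, add_comm, add_left_comm]

lemma psiW_subword (x : ℤ → ZMod 2) (i : ℤ) (n : ℕ) :
    psiW (subword x i (n + 2)) = subword (psiZ x) i (n + 1) := by
  induction n generalizing i with
  | zero => simp only [subword_succ, subword_zero]; rfl
  | succ n ih =>
    rw [subword_succ, subword_succ x (i + 1), psiW, ← subword_succ, ih, subword_succ (psiZ x) i]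
    rfl

lemma subword_mem_F_iff_iterate_psiZ (x : ℤ → ZMod 2) (i : ℤ) (n m : ℕ) :
    subword x i (n + 1 + m) ∈ F (n + 1 + m) ↔
      subword (psiZ^[m] x) i (n + 1) ∈ F (n + 1) := by
  induction m generalizing n x with
  | zero => rfl
  | succ m ih =>
    rw [show n + 1 + (m + 1) = n + m + 2 by omega, F_add_two, Set.mem_preimage, psiW_subword,
      show n + m + 1 = n + 1 + m by omega, ih, iterate_succ_apply]

lemma iterate_two_pow_psiZ (x : ℤ → ZMod 2) (j : ℕ) (i : ℤ) :
    psiZ^[2 ^ j] x i = x i + x (i + 2 ^ j) := by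
  induction j generalizing x i with
  | zero => simp [psiZ]
  | succ j ih =>
    rw [pow_succ, mul_two, iterate_add_apply, ih, ih, ih, add_assoc i, ← mul_two, ← pow_succ]
    linear_combination CharTwo.add_self_eq_zero (x (i + 2 ^ j))

lemma subword_mem_F_two_pow_add_one_iff (x : ℤ → ZMod 2) (i : ℤ) (j : ℕ) :
    subword x i (2 ^ j + 1) ∈ F (2 ^ j + 1) ↔ x i = x (i + 2 ^ j) := by
  rw [add_comm, ← zero_add 1, subword_mem_F_iff_iterate_psiZ, subword_succ, subword_zero,
    iterate_two_pow_psiZ]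
  simp [F, CharTwo.add_eq_zero]

lemma zmod_two_eq_add_one_of_ne : ∀ {a b : ZMod 2}, a ≠ b → a = b + 1 := by decide

section Flip

variable {x : ℤ → ZMod 2} {r d : ℤ} {t : ℕ}
  (hflip : ∀ i : ℤ, Even i → x (i + r + d) ≠ x (i + r))
  (hper : Periodic x ((2 * t + 1) * d))
include hflip hper

lemma apply_succ_mul_add (m : ℤ) : x ((m + 1) * d + r) = x (m * d + r) + 1 := by
  rcases Int.even_or_odd (m * d) with hm | hm
  · have := zmod_two_eq_add_one_of_ne (hflip _ hm)
    rwa [add_right_comm, ← add_one_mul] at this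
  · -- then `d`, hence the period, is odd, so shifting by one period makes the index even
    have hi : Even (m * d + (2 * t + 1) * d) :=
      hm.add_odd (Int.odd_mul.mpr ⟨odd_two_mul_add_one _, (Int.odd_mul.mp hm).2⟩)
    have := zmod_two_eq_add_one_of_ne (hflip _ hi)
    calc x ((m + 1) * d + r) = x (m * d + (2 * t + 1) * d + r + d) := by
          rw [← hper]; congr 1; ring
      _ = x (m * d + (2 * t + 1) * d + r) + 1 := this
      _ = x (m * d + r) + 1 := by rw [add_right_comm, hper]

lemma apply_nat_mul_add (n : ℕ) : x (n * d + r) = x r + n := by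
  induction n with
  | zero => simp
  | succ n ih => push_cast; rw [apply_succ_mul_add hflip hper, ih, add_assoc]

end Flip

lemma not_periodic_odd_mul_of_flip {x : ℤ → ZMod 2} {r d : ℤ} (t : ℕ)
    (hflip : ∀ i : ℤ, Even i → x (i + r + d) ≠ x (i + r)) :
    ¬ Periodic x ((2 * t + 1) * d) := by
  intro hper
  have h := apply_nat_mul_add hflip hper (2 * t + 1)
  have hcycle : x ((2 * t + 1 : ℕ) * d + r) = x r := by rw [add_comm]; push_cast; exact hper r
  have hodd : ((2 * t + 1 : ℕ) : ZMod 2) = 1 := by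
    push_cast; rw [show (2 : ZMod 2) = 0 from rfl, zero_mul, zero_add]
  rw [hcycle, hodd] at h
  simp at h

/-- for any j ≥ 0, no periodic sequence in the PFT X_{2^j+1} has
(2t+1)·2^j as a period. -/
theorem stmt_11 (j t : ℕ) (x : ℤ → ZMod 2) (hx : inX (2 ^ j + 1) x) :
    ¬ ∀ i : ℤ, x (i + (2 * t + 1) * 2 ^ j) = x i := by
  obtain ⟨r, -, hr⟩ := hx
  refine not_periodic_odd_mul_of_flip t (r := r) fun i hi heq => hr i hi ?_
  exact (subword_mem_F_two_pow_add_one_iff x _ j).2 heq.symm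
end

section
/- For any j ≥ 0, the periodic bi-infinite sequence w = (0^{2^{j+1}−1} 1)^∞ (repeating the block of 2^{j+1}−1 zeros followed by a one) belongs to the PFT X_{2^{j+1}}. -/
/-!
Over `𝔽₂` we have `ψ = 1 + σ`, hence `ψ^(2^m) = 1 + σ^(2^m)`: on words, `ψ^[2^m] u = u + σ^(2^m) u`.
On a word of length `2^(m+1)` this adds its two halves, which preserves the number of 1's mod 2;
since `ψ^[2^m]` maps `F (2^(m+1))` into `F (2^m)`, induction shows that every word of
`F (2^(m+1))` has an even number of 1's. Every window of length `2^(j+1)` of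
`(0^(2^(j+1)-1) 1)^∞` contains exactly one 1, so none lies in `F (2^(j+1))`.
-/

open Finset

theorem List.sum_zipWith_add_eq_sum_take_add {M : Type*} [AddCommMonoid M] :
    ∀ (u v : List M), v.length ≤ u.length →
      (zipWith (· + ·) u v).sum = (u.take v.length).sum + v.sum
  | _, [], _ => by simp
  | [], _ :: _, h => by simp at h
  | a :: u, b :: v, h => by
    simp only [zipWith_cons_cons, sum_cons, length_cons, take_succ_cons,
      sum_zipWith_add_eq_sum_take_add u v (by simpa using h)]
    abel

def addDrop {M : Type*} [Add M] (m : ℕ) (u : List M) : List M :=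
  List.zipWith (· + ·) u (u.drop m)

theorem length_addDrop {M : Type*} [Add M] (m : ℕ) (u : List M) :
    (addDrop m u).length = u.length - m := by
  simp [addDrop]

theorem sum_addDrop {M : Type*} [AddCommMonoid M] {m : ℕ} {u : List M}
    (hu : u.length = 2 * m) : (addDrop m u).sum = u.sum := by
  have hdrop : (u.drop m).length = m := by simp; omega
  rw [addDrop, List.sum_zipWith_add_eq_sum_take_add _ _ (by simp), hdrop, ← List.sum_append,
    List.take_append_drop]

theorem addDrop_addDrop {R : Type*} [Ring R] [CharP R 2] (m : ℕ) (u : List R) :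
    addDrop m (addDrop m u) = addDrop (2 * m) u := by
  apply List.ext_getElem
  · simp only [length_addDrop]; omega
  · intro i _ _
    simp only [addDrop, List.getElem_zipWith, List.getElem_drop]
    have hcancel (a b c : R) : a + b + (b + c) = a + c := by
      rw [add_assoc, ← add_assoc b, CharTwo.add_self_eq_zero, zero_add]
    rw [hcancel]
    simp only [two_mul, add_assoc]

theorem psiW_eq_addDrop_one (u : List (ZMod 2)) : psiW u = addDrop 1 u := by
  induction u with
  | nil => rfl
  | cons a t ih =>
    cases t with
    | nil => rfl
    | cons b r => simpa [psiW, addDrop] using ih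

theorem psiW_iterate_two_pow_s14 (k : ℕ) (u : List (ZMod 2)) :
    psiW^[2 ^ k] u = addDrop (2 ^ k) u := by
  induction k generalizing u with
  | zero => simpa using psiW_eq_addDrop_one u
  | succ k ih =>
    rw [pow_succ', two_mul, Function.iterate_add_apply, ih, ih, addDrop_addDrop, two_mul]

theorem F_succ {n : ℕ} (hn : 1 ≤ n) : F (n + 1) = psiW ⁻¹' F n := by
  obtain ⟨n, rfl⟩ := Nat.exists_eq_add_of_le' hn
  rfl

theorem mem_F_add_iff {a : ℕ} (ha : 1 ≤ a) (b : ℕ) (u : List (ZMod 2)) :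
    u ∈ F (a + b) ↔ psiW^[b] u ∈ F a := by
  induction b generalizing u with
  | zero => rfl
  | succ b ih => rw [← add_assoc, F_succ (by omega), Set.mem_preimage, ih,
      Function.iterate_succ_apply]

theorem length_of_mem_F {k : ℕ} {u : List (ZMod 2)} (hu : u ∈ F k) : u.length = k := by
  induction k generalizing u with
  | zero => exact absurd hu (by simp [F])
  | succ k ih =>
    rcases Nat.eq_zero_or_pos k with rfl | hk
    · simp_all [F]
    · rw [F_succ hk] at hu
      have := ih hu
      rw [psiW_eq_addDrop_one, length_addDrop] at this
      omega

theorem sum_eq_zero_of_mem_F_two_pow (m : ℕ) {u : List (ZMod 2)} (hu : u ∈ F (2 ^ m)) :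
    u.sum = 0 := by
  induction m generalizing u with
  | zero => simp_all [F]
  | succ m ih =>
    have hlen : u.length = 2 * 2 ^ m := by rw [length_of_mem_F hu, pow_succ']
    rw [pow_succ', two_mul, mem_F_add_iff Nat.one_le_two_pow, psiW_iterate_two_pow_s14] at hu
    rw [← ih hu, sum_addDrop hlen]

theorem Int.add_emod_eq_emod_iff {K a b t : ℤ} (ht₀ : 0 ≤ t) (htK : t < K) :
    (a + t) % K = b % K ↔ t = (b - a) % K :=
  calc (a + t) % K = b % K ↔ a + t ≡ b [ZMOD K] := Iff.rfl
    _ ↔ t ≡ b - a [ZMOD K] := by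
      rw [Int.modEq_iff_dvd, Int.modEq_iff_dvd, sub_sub]
    _ ↔ t = (b - a) % K := by rw [Int.ModEq, Int.emod_eq_of_lt ht₀ htK]

theorem sum_range_ite_add_emod_eq {M : Type*} [AddCommMonoid M] (m : M) {K : ℕ} (i : ℤ) {c : ℤ}
    (hc₀ : 0 ≤ c) (hcK : c < K) :
    ∑ t ∈ range K, (if (i + t) % (K : ℤ) = c then m else 0) = m := by
  set s := ((c - i) % K).toNat
  have hs : ((c - i) % K : ℤ) = s := (Int.toNat_of_nonneg (Int.emod_nonneg _ (by omega))).symm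
  have hsK : s < K := by have := Int.emod_lt_of_pos (c - i) (by omega : (0 : ℤ) < K); omega
  have hwindow : ∀ t ∈ range K, (i + t) % (K : ℤ) = c ↔ t = s := fun t ht =>
    calc (i + t) % (K : ℤ) = c ↔ (i + t) % (K : ℤ) = c % K := by rw [Int.emod_eq_of_lt hc₀ hcK]
      _ ↔ (t : ℤ) = (c - i) % K := Int.add_emod_eq_emod_iff (by omega) (by simpa using ht)
      _ ↔ t = s := by rw [hs, Nat.cast_inj]
  rw [sum_congr rfl fun t ht => if_congr (hwindow t ht) rfl rfl, sum_ite_eq',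
    if_pos (mem_range.2 hsK)]

theorem sum_subword (x : ℤ → ZMod 2) (i : ℤ) (k : ℕ) :
    (subword x i k).sum = ∑ t ∈ range k, x (i + t) := by
  simp only [subword, bind_pure_comp, List.map_eq_map, List.map_map]
  rfl

/-- the periodic sequence (0^{2^{j+1}−1} 1)^∞ belongs to X_{2^{j+1}}. -/
theorem stmt_14 (j : ℕ) :
    inX (2 ^ (j + 1))
      (fun i : ℤ => if i % (2 ^ (j + 1) : ℤ) = (2 ^ (j + 1) : ℤ) - 1 then 1 else 0) := by
  refine ⟨0, zero_lt_two, fun i _ hi => ?_⟩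
  have hpos : (0 : ℤ) < 2 ^ (j + 1) := by positivity
  have hsum := sum_eq_zero_of_mem_F_two_pow (j + 1) hi
  rw [sum_subword] at hsum
  have hone := sum_range_ite_add_emod_eq (1 : ZMod 2) (K := 2 ^ (j + 1)) (i + (0 : ℕ))
    (c := 2 ^ (j + 1) - 1) (by omega) (by push_cast; omega)
  push_cast at hone
  exact one_ne_zero (hone.symm.trans hsum)
end
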